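/- arXiv:2309.13786 — 2 statements merged into one kernel-verified Lean document; each statement's English description precedes it below -/
import Mathlib

section
/- Let X_1, …, X_n be i.i.d. real random variables with law μ and CDF F(x) = μ((−∞, x]), with order statistics X_(1) ≤ … ≤ X_(n), and let U_(1) ≤ … ≤ U_(n) be the order statistics of n i.i.d. random variables uniformly distributed on [0,1]. Then for any constants 0 ≤ L_1 ≤ L_2 ≤ … ≤ L_n ≤ 1, ℙ(∀ i ∈ {1,…,n} : F(X_(i)) ≥ L_i) ≥ ℙ(∀ i ∈ {1,…,n} : U_(i) ≥ L_i). -/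
/-!
Quantile coupling. Let `Q` be the generalized inverse of `F`. The variables `Q(U_j)` are i.i.d.
with law `μ`, so `(Q(U_j))_j` has the same joint law as `(X_j)_j`. Almost surely every `U_j` lies
in `(0, 1)`, where `Q` is nondecreasing, so the order statistics of `(Q(U_j))_j` are the `Q(U_(i))`,
and `F(Q(u)) ≥ u` turns `U_(i) ≥ L_i` into `F(Q(U_(i))) ≥ L_i`.
-/

open MeasureTheory ProbabilityTheory Set

noncomputable def orderStat {n : ℕ} (x : Fin n → ℝ) : Fin n → ℝ := x ∘ Tuple.sort x

section OrderStat

open Finset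

variable {n : ℕ}

lemma monotone_orderStat (x : Fin n → ℝ) : Monotone (orderStat x) := Tuple.monotone_sort x

lemma orderStat_comp_of_monotoneOn {g : ℝ → ℝ} {s : Set ℝ} (hg : MonotoneOn g s)
    (x : Fin n → ℝ) (hx : ∀ j, x j ∈ s) : orderStat (g ∘ x) = g ∘ orderStat x :=
  (Tuple.comp_sort_eq_comp_iff_monotone.2 fun _ _ hij ↦
    hg (hx _) (hx _) (monotone_orderStat x hij)).symm

lemma orderStat_le_iff_lt_card (x : Fin n → ℝ) (i : Fin n) (t : ℝ) :
    orderStat x i ≤ t ↔ (i : ℕ) < #{j | x j ≤ t} := by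
  rw [← Tuple.lt_card_le_iff_apply_le_of_monotone (monotone_orderStat x)]
  congr! 1
  exact card_equiv (Tuple.sort x) fun _ ↦ by
    simp only [mem_filter, Finset.mem_univ, true_and]
    rfl

lemma measurable_orderStat (i : Fin n) : Measurable fun x : Fin n → ℝ ↦ orderStat x i := by
  refine measurable_of_Iic fun t ↦ ?_
  have hcard : Measurable fun x : Fin n → ℝ ↦ #{j | x j ≤ t} := by
    simp_rw [Finset.card_filter]
    exact measurable_sum _ fun j _ ↦
      Measurable.ite (measurableSet_le (measurable_pi_apply j) measurable_const)
        measurable_const measurable_const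
  simp_rw [Set.preimage, Set.mem_Iic, orderStat_le_iff_lt_card]
  exact hcard (measurableSet_Ioi (a := (i : ℕ)))

end OrderStat

noncomputable def quantile (μ : Measure ℝ) (u : ℝ) : ℝ :=
  if u ∈ Ioo 0 1 then sInf {x | u ≤ cdf μ x} else 0

section Quantile

variable {μ : Measure ℝ} {u t : ℝ}

lemma nonempty_setOf_le_cdf (hu : u < 1) : {x | u ≤ cdf μ x}.Nonempty :=
  ((tendsto_cdf_atTop μ).eventually_const_le hu).exists

lemma bddBelow_setOf_le_cdf (hu : 0 < u) : BddBelow {x | u ≤ cdf μ x} := by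
  obtain ⟨x₀, hx₀⟩ := ((tendsto_cdf_atBot μ).eventually_lt_const hu).exists
  exact ⟨x₀, fun y hy ↦ le_of_not_ge fun hyx ↦ (hy.trans (monotone_cdf μ hyx)).not_gt hx₀⟩

lemma le_cdf_sInf_setOf_le_cdf (hu : u ∈ Ioo 0 1) : u ≤ cdf μ (sInf {x | u ≤ cdf μ x}) := by
  set q := sInf {x | u ≤ cdf μ x}
  refine ge_of_tendsto (((cdf μ).right_continuous q).mono Ioi_subset_Ici_self) ?_
  filter_upwards [self_mem_nhdsWithin] with y hy
  obtain ⟨a, ha, hay⟩ :=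
    (csInf_lt_iff (bddBelow_setOf_le_cdf hu.1) (nonempty_setOf_le_cdf hu.2)).1 hy
  exact ha.trans (monotone_cdf μ hay.le)

lemma quantile_le_iff (hu : u ∈ Ioo 0 1) : quantile μ u ≤ t ↔ u ≤ cdf μ t := by
  rw [quantile, if_pos hu]
  exact ⟨fun h ↦ (le_cdf_sInf_setOf_le_cdf hu).trans (monotone_cdf μ h),
    fun h ↦ csInf_le (bddBelow_setOf_le_cdf hu.1) h⟩

lemma le_cdf_quantile (hu : u ∈ Ioo 0 1) : u ≤ cdf μ (quantile μ u) :=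
  (quantile_le_iff hu).1 le_rfl

lemma monotoneOn_quantile : MonotoneOn (quantile μ) (Ioo 0 1) :=
  fun _ hu _ hv huv ↦ (quantile_le_iff hu).2 (huv.trans (le_cdf_quantile hv))

lemma quantile_eq_zero_of_notMem (hu : u ∉ Ioo 0 1) : quantile μ u = 0 := if_neg hu

lemma measurable_quantile : Measurable (quantile μ) := by
  refine measurable_of_restrict_of_restrict_compl (measurableSet_Ioo (a := (0 : ℝ)) (b := 1))
    (monotoneOn_iff_monotone.1 monotoneOn_quantile).measurable ?_
  have : (Ioo (0 : ℝ) 1)ᶜ.domRestrict (quantile μ) = fun _ ↦ 0 :=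
    funext fun u ↦ quantile_eq_zero_of_notMem u.2
  exact this ▸ measurable_const

lemma quantile_preimage_Iic_inter_Ioo (t : ℝ) :
    quantile μ ⁻¹' Iic t ∩ Ioo 0 1 = Iic (cdf μ t) ∩ Ioo 0 1 := by
  ext u
  simp only [mem_inter_iff, mem_preimage, mem_Iic]
  exact and_congr_left quantile_le_iff

lemma map_quantile_volume_Icc [IsProbabilityMeasure μ] :
    (volume.restrict (Icc 0 1)).map (quantile μ) = μ := by
  have : IsProbabilityMeasure (volume.restrict (Icc (0 : ℝ) 1)) := by
    constructor; simp
  have := Measure.isProbabilityMeasure_map (μ := volume.restrict (Icc (0 : ℝ) 1))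
    (measurable_quantile (μ := μ)).aemeasurable
  refine Measure.ext_of_Iic _ _ fun t ↦ ?_
  calc (volume.restrict (Icc 0 1)).map (quantile μ) (Iic t)
      = volume (quantile μ ⁻¹' Iic t ∩ Ioo 0 1) := by
        rw [Measure.map_apply measurable_quantile measurableSet_Iic,
          Measure.restrict_congr_set Ioo_ae_eq_Icc.symm,
          Measure.restrict_apply (measurable_quantile measurableSet_Iic)]
    _ = volume (Iic (cdf μ t) ∩ Icc 0 1) := by
        rw [quantile_preimage_Iic_inter_Ioo]
        exact measure_congr ((ae_eq_refl _).inter Ioo_ae_eq_Icc)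
    _ = μ (Iic t) := by
        rw [← Ici_inter_Iic, inter_left_comm, Iic_inter_Iic, min_eq_left (cdf_le_one μ t),
          Ici_inter_Iic, Real.volume_Icc, sub_zero, ofReal_cdf]

end Quantile

lemma le_cdf_orderStat_quantile {μ : Measure ℝ} {n : ℕ} {u : Fin n → ℝ}
    (hu : ∀ j, u j ∈ Ioo 0 1) (i : Fin n) :
    orderStat u i ≤ cdf μ (orderStat (quantile μ ∘ u) i) := by
  rw [orderStat_comp_of_monotoneOn monotoneOn_quantile u hu]
  exact le_cdf_quantile (hu _)

lemma ae_mem_Ioo_volume_Icc : ∀ᵐ u ∂volume.restrict (Icc (0 : ℝ) 1), u ∈ Ioo 0 1 := by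
  rw [Measure.restrict_congr_set Ioo_ae_eq_Icc.symm]
  exact ae_restrict_mem measurableSet_Ioo

theorem stmt_2_general
    {Ω : Type*} [MeasurableSpace Ω] (P : Measure Ω) [IsProbabilityMeasure P]
    {Ω' : Type*} [MeasurableSpace Ω'] (P' : Measure Ω') [IsProbabilityMeasure P']
    (n : ℕ) (X : Fin n → Ω → ℝ) (U : Fin n → Ω' → ℝ)
    (μ : Measure ℝ) [IsProbabilityMeasure μ]
    (hXmeas : ∀ i, Measurable (X i))
    (hXindep : iIndepFun X P)
    (hXlaw : ∀ i, Measure.map (X i) P = μ)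
    (hUmeas : ∀ i, Measurable (U i))
    (hUindep : iIndepFun U P')
    (hUlaw : ∀ i, Measure.map (U i) P' = volume.restrict (Set.Icc (0 : ℝ) 1))
    (L : Fin n → ℝ) :
    P' {ω | ∀ i, L i ≤ orderStat (fun j => U j ω) i}
      ≤ P {ω | ∀ i, L i ≤ (μ (Set.Iic (orderStat (fun j => X j ω) i))).toReal} := by
  set Y : Fin n → Ω' → ℝ := fun i ↦ quantile μ ∘ U i
  have hYmeas i : Measurable (Y i) := measurable_quantile.comp (hUmeas i)
  have hYlaw i : P'.map (Y i) = μ := by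
    rw [← Measure.map_map measurable_quantile (hUmeas i), hUlaw i, map_quantile_volume_Icc]
  have hlaw : P'.map (fun ω i ↦ Y i ω) = P.map (fun ω i ↦ X i ω) := by
    rw [(hUindep.comp _ fun _ ↦ measurable_quantile).map_fun_eq_pi_map
        fun i ↦ (hYmeas i).aemeasurable,
      hXindep.map_fun_eq_pi_map fun i ↦ (hXmeas i).aemeasurable]
    simp_rw [hYlaw, hXlaw]
  set B := {x : Fin n → ℝ | ∀ i, L i ≤ cdf μ (orderStat x i)}
  have hB : MeasurableSet B := by
    simp only [B, ofPred_forall]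
    exact .iInter fun i ↦ measurableSet_le measurable_const
      ((monotone_cdf μ).measurable.comp (measurable_orderStat i))
  have hU : ∀ᵐ ω ∂P', ∀ i, U i ω ∈ Ioo 0 1 :=
    ae_all_iff.2 fun i ↦ ae_of_ae_map (hUmeas i).aemeasurable (hUlaw i ▸ ae_mem_Ioo_volume_Icc)
  calc P' {ω | ∀ i, L i ≤ orderStat (fun j ↦ U j ω) i}
      ≤ P' ((fun ω i ↦ Y i ω) ⁻¹' B) := measure_mono_ae <| by
        filter_upwards [hU] with ω hω hL i using (hL i).trans (le_cdf_orderStat_quantile hω i)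
    _ = P ((fun ω i ↦ X i ω) ⁻¹' B) := by
        rw [← Measure.map_apply (measurable_pi_lambda _ hYmeas) hB, hlaw,
          Measure.map_apply (measurable_pi_lambda _ hXmeas) hB]
    _ = P {ω | ∀ i, L i ≤ (μ (Iic (orderStat (fun j ↦ X j ω) i))).toReal} := by
        simp_rw [B, cdf_eq_real]
        rfl

theorem stmt_2
    {Ω : Type*} [MeasurableSpace Ω] (P : Measure Ω) [IsProbabilityMeasure P]
    {Ω' : Type*} [MeasurableSpace Ω'] (P' : Measure Ω') [IsProbabilityMeasure P']
    (n : ℕ) (X : Fin n → Ω → ℝ) (U : Fin n → Ω' → ℝ)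
    (μ : Measure ℝ) [IsProbabilityMeasure μ]
    (hXmeas : ∀ i, Measurable (X i))
    (hXindep : iIndepFun X P)
    (hXlaw : ∀ i, Measure.map (X i) P = μ)
    (hUmeas : ∀ i, Measurable (U i))
    (hUindep : iIndepFun U P')
    (hUlaw : ∀ i, Measure.map (U i) P' = volume.restrict (Set.Icc (0 : ℝ) 1))
    (L : Fin n → ℝ) (hLmono : Monotone L) (hL0 : ∀ i, 0 ≤ L i) (hL1 : ∀ i, L i ≤ 1) :
    P' {ω | ∀ i, L i ≤ orderStat (fun j => U j ω) i}
      ≤ P {ω | ∀ i, L i ≤ (μ (Set.Iic (orderStat (fun j => X j ω) i))).toReal} :=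
  stmt_2_general P P' n X U μ hXmeas hXindep hXlaw hUmeas hUindep hUlaw L
end

section
/- Let f, a, b : [0,1] → ℝ be integrable functions with 0 ≤ a(p) ≤ f(p) ≤ b(p) for all p ∈ [0,1] and ∫_0^1 a(p) dp > 0. Then (∫_0^1 |f(p) − ∫_0^1 f(q) dq| dp) / (2 ∫_0^1 f(p) dp) ≤ (∫_0^1 max( |a(p) − ∫_0^1 b(q) dq| , |b(p) − ∫_0^1 a(q) dq| ) dp) / (2 ∫_0^1 a(p) dp). -/
/-!
Pointwise, `a ≤ f ≤ b` and `∫ a ≤ ∫ f ≤ ∫ b` give `a p - ∫ b ≤ f p - ∫ f ≤ b p - ∫ a`, so the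
numerator on the left is dominated by the one on the right, while the denominator on the left is
at least the one on the right.
-/

open MeasureTheory Set

theorem abs_sub_le_max_abs_sub_of_mem_Icc {a b x A B F : ℝ} (hx : x ∈ Icc a b)
    (hF : F ∈ Icc A B) : |x - F| ≤ max |a - B| |b - A| := by
  obtain ⟨hax, hxb⟩ := hx
  obtain ⟨hAF, hFB⟩ := hF
  rw [abs_le]
  constructor
  · calc -max |a - B| |b - A| ≤ -|a - B| := neg_le_neg (le_max_left _ _)
      _ ≤ a - B := neg_abs_le _
      _ ≤ x - F := by linarith
  · calc x - F ≤ b - A := by linarith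
      _ ≤ |b - A| := le_abs_self _
      _ ≤ max |a - B| |b - A| := le_max_right _ _

theorem IntervalIntegrable.max {f g : ℝ → ℝ} {μ : Measure ℝ} {u v : ℝ}
    (hf : IntervalIntegrable f μ u v) (hg : IntervalIntegrable g μ u v) :
    IntervalIntegrable (fun p => max (f p) (g p)) μ u v :=
  ⟨hf.1.sup hg.1, hf.2.sup hg.2⟩

namespace intervalIntegral

variable {f a b : ℝ → ℝ} {μ : Measure ℝ} [IsLocallyFiniteMeasure μ] {u v : ℝ}

theorem integral_abs_sub_integral_le_integral_max (huv : u ≤ v)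
    (hf : IntervalIntegrable f μ u v) (ha : IntervalIntegrable a μ u v)
    (hb : IntervalIntegrable b μ u v)
    (haf : ∀ p ∈ Icc u v, a p ≤ f p) (hfb : ∀ p ∈ Icc u v, f p ≤ b p) :
    ∫ p in u..v, |f p - ∫ q in u..v, f q ∂μ| ∂μ ≤
      ∫ p in u..v, max |a p - ∫ q in u..v, b q ∂μ| |b p - ∫ q in u..v, a q ∂μ| ∂μ := by
  have hmean : (∫ q in u..v, f q ∂μ) ∈ Icc (∫ q in u..v, a q ∂μ) (∫ q in u..v, b q ∂μ) :=
    ⟨integral_mono_on huv ha hf haf, integral_mono_on huv hf hb hfb⟩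
  refine integral_mono_on huv (hf.sub intervalIntegrable_const).abs
    (((ha.sub intervalIntegrable_const).abs).max (hb.sub intervalIntegrable_const).abs)
    fun p hp => abs_sub_le_max_abs_sub_of_mem_Icc ⟨haf p hp, hfb p hp⟩ hmean

end intervalIntegral

theorem stmt_14_general (f a b : ℝ → ℝ)
    (hf : IntervalIntegrable f volume 0 1)
    (ha : IntervalIntegrable a volume 0 1)
    (hb : IntervalIntegrable b volume 0 1)
    (haf : ∀ p ∈ Set.Icc (0 : ℝ) 1, a p ≤ f p)
    (hfb : ∀ p ∈ Set.Icc (0 : ℝ) 1, f p ≤ b p)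
    (hpos : 0 < ∫ p in (0 : ℝ)..1, a p) :
    (∫ p in (0 : ℝ)..1, |f p - ∫ q in (0 : ℝ)..1, f q|) / (2 * ∫ p in (0 : ℝ)..1, f p)
      ≤ (∫ p in (0 : ℝ)..1,
            max |a p - ∫ q in (0 : ℝ)..1, b q| |b p - ∫ q in (0 : ℝ)..1, a q|)
          / (2 * ∫ p in (0 : ℝ)..1, a p) := by
  have h01 : (0 : ℝ) ≤ 1 := zero_le_one
  have hrhs_nonneg :
      0 ≤ ∫ p in (0 : ℝ)..1, max |a p - ∫ q in (0 : ℝ)..1, b q| |b p - ∫ q in (0 : ℝ)..1, a q| :=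
    intervalIntegral.integral_nonneg h01 fun _ _ => (abs_nonneg _).trans (le_max_left _ _)
  have hmass : (∫ p in (0 : ℝ)..1, a p) ≤ ∫ p in (0 : ℝ)..1, f p :=
    intervalIntegral.integral_mono_on h01 ha hf haf
  exact div_le_div₀ hrhs_nonneg
    (intervalIntegral.integral_abs_sub_integral_le_integral_max h01 hf ha hb haf hfb)
    (by positivity) (by linarith)

theorem stmt_14 (f a b : ℝ → ℝ)
    (hf : IntervalIntegrable f volume 0 1)
    (ha : IntervalIntegrable a volume 0 1)
    (hb : IntervalIntegrable b volume 0 1)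
    (h0 : ∀ p ∈ Set.Icc (0 : ℝ) 1, 0 ≤ a p)
    (haf : ∀ p ∈ Set.Icc (0 : ℝ) 1, a p ≤ f p)
    (hfb : ∀ p ∈ Set.Icc (0 : ℝ) 1, f p ≤ b p)
    (hpos : 0 < ∫ p in (0 : ℝ)..1, a p) :
    (∫ p in (0 : ℝ)..1, |f p - ∫ q in (0 : ℝ)..1, f q|) / (2 * ∫ p in (0 : ℝ)..1, f p)
      ≤ (∫ p in (0 : ℝ)..1,
            max |a p - ∫ q in (0 : ℝ)..1, b q| |b p - ∫ q in (0 : ℝ)..1, a q|)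
          / (2 * ∫ p in (0 : ℝ)..1, a p) :=
  stmt_14_general f a b hf ha hb haf hfb hpos
end
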